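/- Under the hypotheses of the Enhanced Diamond Lemma, any undirected path from x to y is equivalent to a path of the form: a directed path from x to the common normal form z, followed by the reverse of a directed path from y to z. -/
import Mathlib


/-- Undirected walks in a directed graph: edges may be traversed forwards
(`consF`) or backwards (`consB`). -/
inductive Walk {V : Type*} (E : V → V → Prop) : V → V → Type _
  | nil (x : V) : Walk E x x
  | consF {x y z : V} (h : E x y) (w : Walk E y z) : Walk E x z
  | consB {x y z : V} (h : E y x) (w : Walk E y z) : Walk E x z

namespace Walk

variable {V : Type*} {E : V → V → Prop}

/-- Concatenation of walks. -/
def append : ∀ {x y z : V}, Walk E x y → Walk E y z → Walk E x z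
  | _, _, _, nil _, q => q
  | _, _, _, consF h p, q => consF h (p.append q)
  | _, _, _, consB h p, q => consB h (p.append q)

/-- The reverse of a walk. -/
def reverse : ∀ {x y : V}, Walk E x y → Walk E y x
  | _, _, nil x => nil x
  | _, _, consF h p => p.reverse.append (consB h (nil _))
  | _, _, consB h p => p.reverse.append (consF h (nil _))

/-- A walk is directed if all its edges are traversed forwards. -/
inductive IsDirected : ∀ {x y : V}, Walk E x y → Prop
  | nil (x : V) : IsDirected (nil x)
  | consF {x y z : V} (h : E x y) {w : Walk E y z} :
      IsDirected w → IsDirected (consF h w)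

end Walk

/-- An equivalence relation on undirected paths between each pair of vertices,
satisfying the trivial-cycles axiom and the invariance axiom (equivalence is
preserved and reflected by extending both paths with a common edge, at either
endpoint, in either orientation). -/
structure PathEquiv {V : Type*} (E : V → V → Prop) where
  eqv : ∀ {x y : V}, Walk E x y → Walk E x y → Prop
  refl : ∀ {x y : V} (p : Walk E x y), eqv p p
  symm : ∀ {x y : V} {p q : Walk E x y}, eqv p q → eqv q p
  trans : ∀ {x y : V} {p q r : Walk E x y}, eqv p q → eqv q r → eqv p r
  /-- Trivial cycles: `f⁻¹ · f` is equivalent to the trivial path at the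
  starting vertex of `f`. -/
  trivial_cycle : ∀ {x y : V} (p : Walk E x y),
    eqv (p.append p.reverse) (Walk.nil x)
  /-- Invariance under extension by a forward edge at the far endpoint. -/
  inv_right_F : ∀ {x y z : V} (p q : Walk E x y) (h : E y z),
    eqv p q ↔ eqv (p.append (Walk.consF h (Walk.nil z)))
      (q.append (Walk.consF h (Walk.nil z)))
  /-- Invariance under extension by a backward edge at the far endpoint. -/
  inv_right_B : ∀ {x y z : V} (p q : Walk E x y) (h : E z y),
    eqv p q ↔ eqv (p.append (Walk.consB h (Walk.nil z)))
      (q.append (Walk.consB h (Walk.nil z)))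
  /-- Invariance under extension by a forward edge at the starting vertex. -/
  inv_left_F : ∀ {w x y : V} (p q : Walk E x y) (h : E w x),
    eqv p q ↔ eqv (Walk.consF h p) (Walk.consF h q)
  /-- Invariance under extension by a backward edge at the starting vertex. -/
  inv_left_B : ∀ {w x y : V} (p q : Walk E x y) (h : E x w),
    eqv p q ↔ eqv (Walk.consB h p) (Walk.consB h q)


namespace Walk

variable {V : Type*} {E : V → V → Prop}

theorem append_nil : ∀ {x y : V} (p : Walk E x y), p.append (nil y) = p
  | _, _, nil _ => rfl
  | _, _, consF h p => by rw [append, append_nil p]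
  | _, _, consB h p => by rw [append, append_nil p]

theorem append_assoc : ∀ {x y z w : V} (p : Walk E x y) (q : Walk E y z)
    (r : Walk E z w), (p.append q).append r = p.append (q.append r)
  | _, _, _, _, nil _, _, _ => rfl
  | _, _, _, _, consF h p, q, r => by
      rw [append, append, append_assoc p q r, append]
  | _, _, _, _, consB h p, q, r => by
      rw [append, append, append_assoc p q r, append]

theorem consF_append {x y z w : V} (h : E x y) (p : Walk E y z)
    (q : Walk E z w) : (consF h p).append q = consF h (p.append q) := rfl

theorem consB_append {x y z w : V} (h : E y x) (p : Walk E y z)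
    (q : Walk E z w) : (consB h p).append q = consB h (p.append q) := rfl

theorem IsDirected.append : ∀ {x y z : V} {p : Walk E x y} (_ : p.IsDirected)
    {q : Walk E y z} (_ : q.IsDirected), (p.append q).IsDirected
  | _, _, _, _, .nil _, _, hq => hq
  | _, _, _, _, .consF h hw, _, hq => .consF h (hw.append hq)

end Walk

namespace PathEquiv

variable {V : Type*} {E : V → V → Prop} (S : PathEquiv E)

theorem eqv_append_left : ∀ {x y z : V} (r : Walk E x y) {p q : Walk E y z},
    S.eqv p q → S.eqv (r.append p) (r.append q)
  | _, _, _, Walk.nil _, _, _, h => h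
  | _, _, _, Walk.consF e r, _, _, h =>
      (S.inv_left_F _ _ e).mp (eqv_append_left r h)
  | _, _, _, Walk.consB e r, _, _, h =>
      (S.inv_left_B _ _ e).mp (eqv_append_left r h)

theorem eqv_append_right : ∀ {x y z : V} (r : Walk E y z) {p q : Walk E x y},
    S.eqv p q → S.eqv (p.append r) (q.append r)
  | _, _, _, Walk.nil _, p, q, h => by rwa [Walk.append_nil, Walk.append_nil]
  | _, _, _, Walk.consF e r, p, q, h => by
      have h2 := eqv_append_right r ((S.inv_right_F p q e).mp h)
      rwa [Walk.append_assoc, Walk.append_assoc] at h2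
  | _, _, _, Walk.consB e r, p, q, h => by
      have h2 := eqv_append_right r ((S.inv_right_B p q e).mp h)
      rwa [Walk.append_assoc, Walk.append_assoc] at h2

end PathEquiv

theorem exists_normal_form' {V : Type*} {E : V → V → Prop}
    (dcc : WellFounded (fun a b => E b a)) :
    ∀ x : V, ∃ (z : V) (d : Walk E x z), d.IsDirected ∧ ∀ u, ¬ E z u := by
  intro x
  induction x using dcc.induction with
  | _ x ih =>
    by_cases h : ∃ u, E x u
    · obtain ⟨u, hu⟩ := h
      obtain ⟨z, d, hd, hz⟩ := ih u hu
      exact ⟨z, .consF hu d, .consF hu hd, hz⟩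
    · exact ⟨x, .nil x, .nil x, fun u hu => h ⟨u, hu⟩⟩

theorem confluence' {V : Type*} {E : V → V → Prop} (S : PathEquiv E)
    (dcc : WellFounded (fun a b => E b a))
    (ediamond : ∀ (x y z : V) (h₁ : E x y) (h₂ : E x z),
      ∃ (w : V) (p : Walk E y w) (q : Walk E z w),
        p.IsDirected ∧ q.IsDirected ∧
          S.eqv (Walk.consF h₁ p) (Walk.consF h₂ q)) :
    ∀ (x : V) {y z : V} (p : Walk E x y) (q : Walk E x z),
      p.IsDirected → q.IsDirected →
      ∃ (w : V) (p' : Walk E y w) (q' : Walk E z w),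
        p'.IsDirected ∧ q'.IsDirected ∧
          S.eqv (p.append p') (q.append q') := by
  intro x
  induction x using dcc.induction with
  | _ x ih =>
    intro y z p q hp hq
    cases hp with
    | nil =>
      refine ⟨z, q, .nil z, hq, .nil z, ?_⟩
      rw [Walk.append_nil]
      exact S.refl q
    | @consF _ y₁ _ h₁ p₁ hp₁ =>
      cases hq with
      | nil =>
        refine ⟨y, .nil y, Walk.consF h₁ p₁, .nil y, .consF h₁ hp₁, ?_⟩
        rw [Walk.append_nil]
        exact S.refl _
      | @consF _ z₁ _ h₂ q₁ hq₁ =>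
        obtain ⟨v, a, b, ha, hb, hab⟩ := ediamond _ _ _ h₁ h₂
        obtain ⟨v₂, p₂, a₂, hp₂, ha₂, h2⟩ := ih _ h₁ p₁ a hp₁ ha
        obtain ⟨w, q₃, c, hq₃, hc, h3⟩ := ih _ h₂ q₁ (b.append a₂) hq₁ (hb.append ha₂)
        refine ⟨w, p₂.append c, q₃, hp₂.append hc, hq₃, ?_⟩
        -- goal : eqv (consF h₁ (p₁.append (p₂.append c))) (consF h₂ (q₁.append q₃))
        have s1 : S.eqv (Walk.consF h₁ (p₁.append (p₂.append c)))
            (Walk.consF h₁ ((a.append a₂).append c)) := by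
          have := S.eqv_append_right c h2
          rw [Walk.append_assoc] at this
          exact (S.inv_left_F _ _ h₁).mp this
        have s2 : S.eqv (Walk.consF h₁ ((a.append a₂).append c))
            (Walk.consF h₂ (b.append (a₂.append c))) := by
          have := S.eqv_append_right (a₂.append c) hab
          simp only [Walk.consF_append] at this
          rwa [← Walk.append_assoc] at this
        have s3 : S.eqv (Walk.consF h₂ (b.append (a₂.append c)))
            (Walk.consF h₂ (q₁.append q₃)) := by
          have := (S.inv_left_F _ _ h₂).mp h3
          rw [Walk.append_assoc] at this
          exact S.symm this
        exact S.trans (S.trans s1 s2) s3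

/-- Under the hypotheses of the Enhanced Diamond Lemma, any undirected path
from `x` to `y` is equivalent to a path of the form: a directed path from `x`
to the common normal form `z` (a terminal vertex), followed by the reverse of
a directed path from `y` to `z`. -/
theorem enhanced_diamond_path_normal_form {V : Type*} (E : V → V → Prop)
    (S : PathEquiv E)
    (dcc : WellFounded (fun a b => E b a))
    (ediamond : ∀ (x y z : V) (h₁ : E x y) (h₂ : E x z),
      ∃ (w : V) (p : Walk E y w) (q : Walk E z w),
        p.IsDirected ∧ q.IsDirected ∧
          S.eqv (Walk.consF h₁ p) (Walk.consF h₂ q)) :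
    ∀ (x y : V) (p : Walk E x y),
      ∃ (z : V) (d₁ : Walk E x z) (d₂ : Walk E y z),
        (∀ u : V, ¬ E z u) ∧ d₁.IsDirected ∧ d₂.IsDirected ∧
          S.eqv p (d₁.append d₂.reverse) := by
  intro x y p
  induction p with
  | nil x =>
    obtain ⟨z, d, hd, hz⟩ := exists_normal_form' dcc x
    exact ⟨z, d, d, hz, hd, hd, S.symm (S.trivial_cycle d)⟩
  | @consF x y' y h w ih =>
    obtain ⟨z, d₁, d₂, hz, hd₁, hd₂, heqv⟩ := ih
    exact ⟨z, .consF h d₁, d₂, hz, .consF h hd₁, hd₂,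
      (S.inv_left_F _ _ h).mp heqv⟩
  | @consB x y' y h w ih =>
    obtain ⟨z, d₁, d₂, hz, hd₁, hd₂, heqv⟩ := ih
    -- h : E y' x, d₁ : Walk E y' z directed, z terminal
    obtain ⟨w', p', q', hp', hq', hpq⟩ :=
      confluence' S dcc ediamond y' (Walk.consF h (.nil x)) d₁
        (.consF h (.nil x)) hd₁
    -- q' : Walk E z w' directed, z terminal ⇒ q' = nil
    cases hq' with
    | consF h' _ => exact absurd h' (hz _)
    | nil =>
      rw [Walk.append_nil] at hpq
      -- hpq : eqv (consF h p') d₁   (since (consF h nil).append p' = consF h p')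
      refine ⟨z, p', d₂, hz, hp', hd₂, ?_⟩
      -- goal: eqv (consB h w) (p'.append d₂.reverse)
      have e1 : S.eqv (Walk.consB h w) (Walk.consB h (d₁.append d₂.reverse)) :=
        (S.inv_left_B _ _ h).mp heqv
      have e2 : S.eqv (d₁.append d₂.reverse)
          ((Walk.consF h p').append d₂.reverse) :=
        S.eqv_append_right _ (S.symm hpq)
      have e3 : S.eqv (Walk.consB h w)
          (Walk.consB h (Walk.consF h (p'.append d₂.reverse))) :=
        S.trans e1 ((S.inv_left_B _ _ h).mp e2)
      -- trivial cycle: consB h (consF h r) ∼ r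
      have tc : S.eqv (Walk.consB h (Walk.consF h (Walk.nil x))) (Walk.nil x) :=
        S.trivial_cycle (Walk.consB h (Walk.nil y'))
      have tc2 := S.eqv_append_right (p'.append d₂.reverse) tc
      exact S.trans e3 tc2
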